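/- Let n be a positive integer, let x₁, …, xₙ > 0, let α, β > 0, let γₜ > 0, let γ be a real number with 0 < γ < 2γₜ, and let γ₀ denote the Euler–Mascheroni constant. Set S₁ = ∑_{m=0}^{∞} (1/(m+1) − 1/(m + α/γ)) and S₂ = ∑_{m=0}^{∞} 1/(m + α/γ)². Then n[ −1/γ² − (2α/γ³)(−γ₀ + S₁) − (α²/γ⁴) S₂ ] − β^γ ∑_{i=1}^{n} x_i^γ (log(β x_i))² ≥ n[ −2/γ² + 2αγ₀/γ³ − (2 + π²/6)·(α²/γ⁴) ] − ∑_{i=1}^{n} [ 4 e^{2 max(γₜ log(β x_i) − 1, 0)} 𝟙(x_i > 1/β) / (2γₜ − γ)² + 2·𝟙(x_i ≤ 1/β) / (3γ²) ], where 𝟙(·) is the indicator function. -/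

import Mathlib

/-!
Write `t = log (β x)`, so that `β^γ x^γ (log (β x))² = e^{γ t} t²`. Everything rests on
`s² ≤ 4 e^{s - 2}` for `s ≥ 0` (square `s/2 ≤ e^{s/2 - 1}`). For `t ≤ 0` take `s = -γ t` and use
`4 e⁻² ≤ 2/3`; for `t > 0` take `s = (2γₜ - γ) t`, which leaves the factor `e^{2γₜ t - 2}`.
For the series, `∑ (1/(m+1) - 1/(m+a)) ≤ ∑ a (1/(m+1) - 1/(m+2)) = a` termwise, and
`∑ 1/(m+a)² ≤ 1/a² + ζ(2)` after splitting off the term `m = 0`.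
-/

open Real Finset Filter Topology

lemma sq_le_four_mul_exp_sub_two {s : ℝ} (hs : 0 ≤ s) : s ^ 2 ≤ 4 * exp (s - 2) := by
  have half_le : s / 2 ≤ exp (s / 2 - 1) := by linarith [add_one_le_exp (s / 2 - 1)]
  calc s ^ 2 = 4 * (s / 2) ^ 2 := by ring
    _ ≤ 4 * exp (s / 2 - 1) ^ 2 := by gcongr
    _ = 4 * exp (s - 2) := by rw [sq, ← exp_add]; ring_nf

lemma four_mul_exp_neg_two_le : 4 * exp (-2) ≤ 2 / 3 := by
  have six_le : 6 ≤ exp 2 := by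
    have : exp 2 = exp 1 * exp 1 := by rw [← exp_add]; norm_num
    nlinarith [exp_one_gt_d9]
  rw [exp_neg, ← div_eq_mul_inv, div_le_div_iff₀ (exp_pos 2) (by norm_num)]
  linarith

lemma exp_mul_mul_sq_le_of_nonpos {γ t : ℝ} (hγ : 0 < γ) (ht : t ≤ 0) :
    exp (γ * t) * t ^ 2 ≤ 2 / (3 * γ ^ 2) := by
  have key := sq_le_four_mul_exp_sub_two (s := -(γ * t)) (by nlinarith)
  have : (γ * t) ^ 2 * exp (γ * t) ≤ 4 * exp (-2) :=
    calc (γ * t) ^ 2 * exp (γ * t) ≤ 4 * exp (-(γ * t) - 2) * exp (γ * t) := by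
          gcongr; simpa using key
      _ = 4 * exp (-2) := by rw [mul_assoc, ← exp_add]; ring_nf
  rw [le_div_iff₀ (by positivity)]
  nlinarith [four_mul_exp_neg_two_le]

lemma exp_mul_mul_sq_le_of_nonneg {γ c t : ℝ} (hγc : γ < c) (ht : 0 ≤ t) :
    exp (γ * t) * t ^ 2 ≤ 4 * exp (c * t - 2) / (c - γ) ^ 2 := by
  have key := sq_le_four_mul_exp_sub_two (s := (c - γ) * t) (by nlinarith)
  rw [le_div_iff₀ (by nlinarith)]
  calc exp (γ * t) * t ^ 2 * (c - γ) ^ 2 = ((c - γ) * t) ^ 2 * exp (γ * t) := by ring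
    _ ≤ 4 * exp ((c - γ) * t - 2) * exp (γ * t) := by gcongr
    _ = 4 * exp (c * t - 2) := by rw [mul_assoc, ← exp_add]; ring_nf

lemma rpow_mul_rpow_mul_log_sq_le {β γt γ x : ℝ} (hβ : 0 < β) (hx : 0 < x) (hγ : 0 < γ)
    (hγ' : γ < 2 * γt) :
    β ^ γ * (x ^ γ * log (β * x) ^ 2) ≤
      4 * exp (2 * max (γt * log (β * x) - 1) 0) * (if 1 / β < x then (1 : ℝ) else 0) /
          (2 * γt - γ) ^ 2 + 2 * (if x ≤ 1 / β then (1 : ℝ) else 0) / (3 * γ ^ 2) := by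
  have hβx : 0 < β * x := mul_pos hβ hx
  have as_exp : β ^ γ * (x ^ γ * log (β * x) ^ 2) = exp (γ * log (β * x)) * log (β * x) ^ 2 := by
    rw [← mul_assoc, ← mul_rpow hβ.le hx.le, rpow_def_of_pos hβx, mul_comm (log _)]
  rw [as_exp]
  by_cases hle : x ≤ 1 / β
  · have ht : log (β * x) ≤ 0 := log_nonpos hβx.le (by rwa [le_div_iff₀ hβ, mul_comm] at hle)
    simpa only [hle, not_lt.mpr hle, if_true, if_false, mul_zero, zero_div, zero_add, mul_one]
      using exp_mul_mul_sq_le_of_nonpos hγ ht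
  · have hlt : 1 / β < x := not_le.mp hle
    have ht : 0 ≤ log (β * x) := log_nonneg (by rw [div_lt_iff₀ hβ] at hlt; linarith)
    simp only [hlt, hle, if_true, if_false, mul_one, mul_zero, zero_div, add_zero]
    calc _ ≤ 4 * exp (2 * γt * log (β * x) - 2) / (2 * γt - γ) ^ 2 :=
          exp_mul_mul_sq_le_of_nonneg hγ' ht
      _ ≤ _ := by gcongr; linarith [le_max_left (γt * log (β * x) - 1) 0]

lemma hasSum_sub_succ_of_antitone {f : ℕ → ℝ} {l : ℝ} (hf : Antitone f)
    (hl : Tendsto f atTop (𝓝 l)) : HasSum (fun n ↦ f n - f (n + 1)) (f 0 - l) := by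
  rw [hasSum_iff_tendsto_nat_of_nonneg fun n ↦ sub_nonneg.mpr (hf n.le_succ)]
  simpa only [sum_range_sub'] using (tendsto_const_nhds (x := f 0)).sub hl

lemma tsum_one_div_add_one_sub_one_div_add_le {a : ℝ} (ha : 0 < a) :
    ∑' m : ℕ, (1 / ((m : ℝ) + 1) - 1 / ((m : ℝ) + a)) ≤ a := by
  have telescope : HasSum (fun m : ℕ ↦ a / ((m : ℝ) + 1) - a / ((m : ℝ) + 2)) a := by
    have anti : Antitone fun m : ℕ ↦ a / ((m : ℝ) + 1) := fun m k hmk ↦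
      div_le_div_of_nonneg_left ha.le (by positivity) (by gcongr)
    have lim : Tendsto (fun m : ℕ ↦ a / ((m : ℝ) + 1)) atTop (𝓝 0) := by
      simpa [div_eq_mul_one_div a] using
        (tendsto_one_div_add_atTop_nhds_zero_nat (𝕜 := ℝ)).const_mul a
    convert hasSum_sub_succ_of_antitone anti lim using 2 with m
    · push_cast; ring_nf
    · simp
  -- `1/(m+1) - 1/(m+a) = (a-1)/((m+1)(m+a))`, and `(a-1)(m+2) ≤ a(m+a)` as `(a-1)² + m + 1 ≥ 0`.
  have termwise (m : ℕ) :
      1 / ((m : ℝ) + 1) - 1 / ((m : ℝ) + a) ≤ a / ((m : ℝ) + 1) - a / ((m : ℝ) + 2) := by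
    rw [div_sub_div _ _ (by positivity) (by positivity),
      div_sub_div _ _ (by positivity) (by positivity),
      div_le_div_iff₀ (by positivity) (by positivity)]
    nlinarith [sq_nonneg (a - 1), (m.cast_nonneg : (0 : ℝ) ≤ m), mul_pos ha ha]
  by_cases hs : Summable fun m : ℕ ↦ 1 / ((m : ℝ) + 1) - 1 / ((m : ℝ) + a)
  · exact (hs.tsum_le_tsum termwise telescope.summable).trans_eq telescope.tsum_eq
  · rw [tsum_eq_zero_of_not_summable hs]; exact ha.le

lemma tsum_one_div_add_sq_le {a : ℝ} (ha : 0 < a) :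
    ∑' m : ℕ, 1 / ((m : ℝ) + a) ^ 2 ≤ 1 / a ^ 2 + π ^ 2 / 6 := by
  have basel : HasSum (fun m : ℕ ↦ 1 / ((m : ℝ) + 1) ^ 2) (π ^ 2 / 6) := by
    simpa using (hasSum_nat_add_iff' 1).mpr hasSum_zeta_two
  have termwise (m : ℕ) : 1 / (((m + 1 : ℕ) : ℝ) + a) ^ 2 ≤ 1 / ((m : ℝ) + 1) ^ 2 :=
    one_div_le_one_div_of_le (by positivity)
      (pow_le_pow_left₀ (by positivity) (by push_cast; linarith) 2)
  have shifted : Summable fun m : ℕ ↦ 1 / (((m + 1 : ℕ) : ℝ) + a) ^ 2 :=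
    basel.summable.of_nonneg_of_le (fun _ ↦ by positivity) termwise
  have hs : Summable fun m : ℕ ↦ 1 / ((m : ℝ) + a) ^ 2 :=
    (summable_nat_add_iff (f := fun m : ℕ ↦ 1 / ((m : ℝ) + a) ^ 2) 1).mp shifted
  rw [hs.tsum_eq_zero_add, Nat.cast_zero, zero_add]
  gcongr
  exact (shifted.tsum_le_tsum termwise basel.summable).trans_eq basel.tsum_eq

/-- `n` times this bracket is the `∂²/∂γ²` of `n (log γ - log Γ(α/γ))`, with `ψ(α/γ) = -γ₀ + S₁`
and `ψ'(α/γ) = S₂` written as series. -/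
lemma log_normalizer_second_deriv_ge {α γ : ℝ} (hα : 0 < α) (hγ : 0 < γ) :
    -2 / γ ^ 2 + 2 * α * eulerMascheroniConstant / γ ^ 3 - (2 + π ^ 2 / 6) * (α ^ 2 / γ ^ 4) ≤
      -1 / γ ^ 2 - (2 * α / γ ^ 3) * (-eulerMascheroniConstant +
          ∑' m : ℕ, (1 / ((m : ℝ) + 1) - 1 / ((m : ℝ) + α / γ))) -
        (α ^ 2 / γ ^ 4) * ∑' m : ℕ, 1 / ((m : ℝ) + α / γ) ^ 2 := by
  have ha : 0 < α / γ := div_pos hα hγ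
  have hS₁ := mul_le_mul_of_nonneg_left (tsum_one_div_add_one_sub_one_div_add_le ha)
    (by positivity : (0 : ℝ) ≤ 2 * α / γ ^ 3)
  have hS₂ := mul_le_mul_of_nonneg_left (tsum_one_div_add_sq_le ha)
    (by positivity : (0 : ℝ) ≤ α ^ 2 / γ ^ 4)
  have bound_eq : -1 / γ ^ 2 - 2 * α / γ ^ 3 * (-eulerMascheroniConstant + α / γ) -
      α ^ 2 / γ ^ 4 * (1 / (α / γ) ^ 2 + π ^ 2 / 6) =
      -2 / γ ^ 2 + 2 * α * eulerMascheroniConstant / γ ^ 3 - (2 + π ^ 2 / 6) * (α ^ 2 / γ ^ 4) := by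
    field_simp
    ring
  nlinarith

theorem self_lower_bound_gamma_general (n : ℕ) (x : Fin n → ℝ)
    (hx : ∀ i, 0 < x i) (α β γt γ : ℝ) (hα : 0 < α) (hβ : 0 < β)
    (hγ : 0 < γ) (hγ' : γ < 2 * γt) :
    (n : ℝ) * (-2 / γ ^ 2 + 2 * α * Real.eulerMascheroniConstant / γ ^ 3 -
          (2 + π ^ 2 / 6) * (α ^ 2 / γ ^ 4)) -
        ∑ i, (4 * Real.exp (2 * max (γt * Real.log (β * x i) - 1) 0) *
              (if 1 / β < x i then (1 : ℝ) else 0) / (2 * γt - γ) ^ 2 +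
            2 * (if x i ≤ 1 / β then (1 : ℝ) else 0) / (3 * γ ^ 2)) ≤
      (n : ℝ) * (-1 / γ ^ 2 -
            (2 * α / γ ^ 3) *
              (-Real.eulerMascheroniConstant +
                ∑' m : ℕ, (1 / ((m : ℝ) + 1) - 1 / ((m : ℝ) + α / γ))) -
            (α ^ 2 / γ ^ 4) * ∑' m : ℕ, 1 / ((m : ℝ) + α / γ) ^ 2) -
        β ^ γ * ∑ i, (x i) ^ γ * (Real.log (β * x i)) ^ 2 := by
  have normalizer := mul_le_mul_of_nonneg_left (log_normalizer_second_deriv_ge hα hγ) n.cast_nonneg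
  have observations : β ^ γ * ∑ i, x i ^ γ * log (β * x i) ^ 2 ≤
      ∑ i, (4 * exp (2 * max (γt * log (β * x i) - 1) 0) * (if 1 / β < x i then (1 : ℝ) else 0) /
          (2 * γt - γ) ^ 2 + 2 * (if x i ≤ 1 / β then (1 : ℝ) else 0) / (3 * γ ^ 2)) := by
    rw [mul_sum]
    exact sum_le_sum fun i _ ↦ rpow_mul_rpow_mul_log_sq_le hβ (hx i) hγ hγ'
  linarith

/-- The SeLF lower bound for the second-order partial derivative `∂²l/∂γ²` of the
generalized Gamma log-likelihood, with current iterate `γₜ`: with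
`S₁ = ∑_{m=0}^∞ (1/(m+1) − 1/(m+α/γ))`, `S₂ = ∑_{m=0}^∞ 1/(m+α/γ)²` and `γ₀`
the Euler–Mascheroni constant,
`n[−1/γ² − (2α/γ³)(−γ₀ + S₁) − (α²/γ⁴)S₂] − β^γ ∑ᵢ xᵢ^γ (log(βxᵢ))²
 ≥ n[−2/γ² + 2αγ₀/γ³ − (2 + π²/6)(α²/γ⁴)]
   − ∑ᵢ [4 e^{2max(γₜ log(βxᵢ)−1,0)} 𝟙(xᵢ > 1/β)/(2γₜ−γ)² + 2·𝟙(xᵢ ≤ 1/β)/(3γ²)]`. -/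
theorem self_lower_bound_gamma (n : ℕ) (hn : 0 < n) (x : Fin n → ℝ)
    (hx : ∀ i, 0 < x i) (α β γt γ : ℝ) (hα : 0 < α) (hβ : 0 < β)
    (hγt : 0 < γt) (hγ : 0 < γ) (hγ' : γ < 2 * γt) :
    (n : ℝ) * (-2 / γ ^ 2 + 2 * α * Real.eulerMascheroniConstant / γ ^ 3 -
          (2 + π ^ 2 / 6) * (α ^ 2 / γ ^ 4)) -
        ∑ i, (4 * Real.exp (2 * max (γt * Real.log (β * x i) - 1) 0) *
              (if 1 / β < x i then (1 : ℝ) else 0) / (2 * γt - γ) ^ 2 +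
            2 * (if x i ≤ 1 / β then (1 : ℝ) else 0) / (3 * γ ^ 2)) ≤
      (n : ℝ) * (-1 / γ ^ 2 -
            (2 * α / γ ^ 3) *
              (-Real.eulerMascheroniConstant +
                ∑' m : ℕ, (1 / ((m : ℝ) + 1) - 1 / ((m : ℝ) + α / γ))) -
            (α ^ 2 / γ ^ 4) * ∑' m : ℕ, 1 / ((m : ℝ) + α / γ) ^ 2) -
        β ^ γ * ∑ i, (x i) ^ γ * (Real.log (β * x i)) ^ 2 :=
  self_lower_bound_gamma_general n x hx α β γt γ hα hβ hγ hγ'
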